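/- arXiv:1002.4641 — 2 statements merged into one kernel-verified Lean document; each statement's English description precedes it below -/
import Mathlib

section
/- Let B and S be finite sets of buyers and sellers with nonnegative demand D : B → ℝ and supply Sup : S → ℝ, and let the link relation be complete (every buyer is linked to every seller). Suppose ∑_b D b = ∑_s Sup s. Then for every trading session (any sequence performing one trade on each link, each link used at most once, in any order, where a trade on link (b,s) transfers min of the current demand of b and current supply of s), the final demand of every buyer is zero. -/
open scoped Classical

/-- A trading state: current demands of buyers and supplies of sellers. -/
structure TState (B S : Type*) where
  dem : B → ℝ
  sup : S → ℝ

/-- One trade on link `(b, s)`: the maximal amount `min (dem b) (sup s)` is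
transferred, leaving demand `max 0 (dem b - sup s)` and supply
`max 0 (sup s - dem b)`; all other values are unchanged. -/
def trade {B S : Type*} [DecidableEq B] [DecidableEq S]
    (st : TState B S) (l : B × S) : TState B S where
  dem := Function.update st.dem l.1 (max 0 (st.dem l.1 - st.sup l.2))
  sup := Function.update st.sup l.2 (max 0 (st.sup l.2 - st.dem l.1))

/-- Execute a sequence of trades in order. -/
def runSession {B S : Type*} [DecidableEq B] [DecidableEq S]
    (st : TState B S) (seq : List (B × S)) : TState B S :=
  seq.foldl trade st

/-- The bipartite graph on `B ⊕ S` induced by the link set `L`. -/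
def linkGraph {B S : Type*} (L : Finset (B × S)) : SimpleGraph (B ⊕ S) where
  Adj v w := ∃ p ∈ L, (v = Sum.inl p.1 ∧ w = Sum.inr p.2) ∨ (v = Sum.inr p.2 ∧ w = Sum.inl p.1)
  symm := ⟨by rintro v w ⟨p, hp, h | h⟩ <;> exact ⟨p, hp, by tauto⟩⟩
  loopless := ⟨by rintro v ⟨p, hp, ⟨rfl, h⟩ | ⟨rfl, h⟩⟩ <;> simp_all⟩

/-!
Every trade keeps demands and supplies nonnegative, only lowers them, and preserves the excess
`∑ demand - ∑ supply`. Right after the trade on `(b, s)` one of `b`, `s` is exhausted, and since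
values only decrease this stays true until the end of the session. A complete session trades
every pair, so at the end `min (dem b) (sup s) = 0` for all `b`, `s`: a buyer with positive
remaining demand would force all supplies, hence by the preserved balance all demands, to vanish.
-/

namespace TState

variable {B S : Type*}

def Nonneg (st : TState B S) : Prop := 0 ≤ st.dem ∧ 0 ≤ st.sup

def excess [Fintype B] [Fintype S] (st : TState B S) : ℝ := ∑ b, st.dem b - ∑ s, st.sup s

end TState

section Trade

variable {B S : Type*} [DecidableEq B] [DecidableEq S]

open TState

lemma TState.Nonneg.trade {st : TState B S} (h : st.Nonneg) (l : B × S) :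
    (trade st l).Nonneg := by
  refine ⟨fun b => ?_, fun s => ?_⟩
  · rcases eq_or_ne b l.1 with rfl | hb
    · simp [_root_.trade]
    · simpa [_root_.trade, Function.update_of_ne hb] using h.1 b
  · rcases eq_or_ne s l.2 with rfl | hs
    · simp [_root_.trade]
    · simpa [_root_.trade, Function.update_of_ne hs] using h.2 s

lemma trade_dem_le {st : TState B S} (h : st.Nonneg) (l : B × S) :
    (trade st l).dem ≤ st.dem := by
  intro b
  rcases eq_or_ne b l.1 with rfl | hb
  · simpa [trade] using ⟨h.1 _, h.2 l.2⟩
  · simp [trade, Function.update_of_ne hb]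

lemma trade_sup_le {st : TState B S} (h : st.Nonneg) (l : B × S) :
    (trade st l).sup ≤ st.sup := by
  intro s
  rcases eq_or_ne s l.2 with rfl | hs
  · simpa [trade] using ⟨h.2 _, h.1 l.1⟩
  · simp [trade, Function.update_of_ne hs]

lemma min_trade_eq_zero (st : TState B S) (l : B × S) :
    min ((trade st l).dem l.1) ((trade st l).sup l.2) = 0 := by
  simp only [trade, Function.update_self]
  rcases le_total (st.dem l.1) (st.sup l.2) with h | h
  · rw [max_eq_left (by linarith)]
    exact min_eq_left (le_max_left _ _)
  · rw [max_eq_left (by linarith : st.sup l.2 - st.dem l.1 ≤ 0)]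
    exact min_eq_right (le_max_left _ _)

lemma excess_trade [Fintype B] [Fintype S] (st : TState B S) (l : B × S) :
    (trade st l).excess = st.excess := by
  simp only [excess, trade, Finset.sum_update_of_mem (Finset.mem_univ _),
    Finset.sdiff_singleton_eq_erase]
  rw [← Finset.add_sum_erase _ st.dem (Finset.mem_univ l.1),
    ← Finset.add_sum_erase _ st.sup (Finset.mem_univ l.2)]
  rcases le_total (st.dem l.1) (st.sup l.2) with h | h
  · rw [max_eq_left (by linarith), max_eq_right (by linarith)]; ring
  · rw [max_eq_right (by linarith), max_eq_left (by linarith)]; ring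

end Trade

section Session

variable {B S : Type*} [DecidableEq B] [DecidableEq S]

lemma runSession_cons (st : TState B S) (l : B × S) (seq : List (B × S)) :
    runSession st (l :: seq) = runSession (trade st l) seq := rfl

lemma runSession_append (st : TState B S) (pre post : List (B × S)) :
    runSession st (pre ++ post) = runSession (runSession st pre) post :=
  List.foldl_append

lemma TState.Nonneg.runSession {st : TState B S} (h : st.Nonneg) (seq : List (B × S)) :
    (runSession st seq).Nonneg := by
  induction seq generalizing st with
  | nil => exact h
  | cons l seq ih => exact ih (h.trade l)

lemma runSession_le {st : TState B S} (h : st.Nonneg) (seq : List (B × S)) :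
    (runSession st seq).dem ≤ st.dem ∧ (runSession st seq).sup ≤ st.sup := by
  induction seq generalizing st with
  | nil => exact ⟨le_rfl, le_rfl⟩
  | cons l seq ih =>
    obtain ⟨hd, hs⟩ := ih (h.trade l)
    exact ⟨hd.trans (trade_dem_le h l), hs.trans (trade_sup_le h l)⟩

lemma excess_runSession [Fintype B] [Fintype S] (st : TState B S) (seq : List (B × S)) :
    (runSession st seq).excess = st.excess := by
  induction seq generalizing st with
  | nil => rfl
  | cons l seq ih => rw [runSession_cons, ih, excess_trade]

lemma min_runSession_eq_zero_of_mem {st : TState B S} (h : st.Nonneg) {seq : List (B × S)}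
    {l : B × S} (hl : l ∈ seq) :
    min ((runSession st seq).dem l.1) ((runSession st seq).sup l.2) = 0 := by
  obtain ⟨pre, post, rfl⟩ := List.append_of_mem hl
  set st₁ := trade (runSession st pre) l
  have h₁ : st₁.Nonneg := (h.runSession pre).trade l
  rw [runSession_append, runSession_cons]
  obtain ⟨hd, hs⟩ := runSession_le h₁ post
  refine le_antisymm ?_ (le_min ((h₁.runSession post).1 l.1) ((h₁.runSession post).2 l.2))
  calc min ((runSession st₁ post).dem l.1) ((runSession st₁ post).sup l.2)
      ≤ min (st₁.dem l.1) (st₁.sup l.2) := min_le_min (hd l.1) (hs l.2)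
    _ = 0 := min_trade_eq_zero _ l

end Session

lemma eq_zero_of_sum_eq_sum_of_min_eq_zero {B S : Type*} [Fintype B] [Fintype S]
    {f : B → ℝ} {g : S → ℝ} (hf : 0 ≤ f) (hsum : ∑ b, f b = ∑ s, g s)
    (hmin : ∀ b s, min (f b) (g s) = 0) (b : B) : f b = 0 := by
  by_contra hb
  have hpos : 0 < f b := lt_of_le_of_ne (hf b) (Ne.symm hb)
  have hg : ∀ s, g s = 0 := fun s => by
    have := hmin b s
    rcases min_choice (f b) (g s) with h | h <;> rw [h] at this
    exacts [absurd this hpos.ne', this]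
  have hf0 : ∑ b, f b = 0 := by simp [hsum, hg]
  exact hb ((Finset.sum_eq_zero_iff_of_nonneg fun b _ => hf b).1 hf0 b (Finset.mem_univ b))

/-- On the complete bipartite graph with total supply equal to total demand,
every trading session (every ordering of all the links, each used once)
reduces every buyer's demand to zero. -/
theorem stmt_4 {B S : Type*} [Fintype B] [Fintype S] [DecidableEq B] [DecidableEq S]
    (D : B → ℝ) (Sup : S → ℝ) (hD : ∀ b, 0 ≤ D b) (hS : ∀ s, 0 ≤ Sup s)
    (hbal : ∑ b, D b = ∑ s, Sup s)
    (seq : List (B × S))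
    (hseq : seq.Perm (Finset.univ ×ˢ Finset.univ : Finset (B × S)).toList) :
    ∀ b, (runSession ⟨D, Sup⟩ seq).dem b = 0 := by
  have h₀ : TState.Nonneg ⟨D, Sup⟩ := ⟨hD, hS⟩
  have hF := h₀.runSession seq
  have hbalF :
      ∑ b, (runSession ⟨D, Sup⟩ seq).dem b = ∑ s, (runSession ⟨D, Sup⟩ seq).sup s := by
    have := excess_runSession ⟨D, Sup⟩ seq
    simp only [TState.excess] at this
    linarith
  refine eq_zero_of_sum_eq_sum_of_min_eq_zero hF.1 hbalF fun b s => ?_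
  exact min_runSession_eq_zero_of_mem (l := (b, s)) h₀ (hseq.mem_iff.2 (by simp))
end

section
/- Let B, S be finite sets with D : B → ℝ≥0, Sup : S → ℝ≥0, l : B × S → {0,1}. If the bipartite graph induced by l restricted to each connected component satisfies ∑_{i ∈ comp} D_i ≤ ∑_{j ∈ comp} Sup_j, and every connected component is complete bipartite, then the constraint system t_{ij} ≥ 0, t_{ij} = 0 when l_{ij} = 0, ∑_j t_{ij} = D_i for all i, ∑_i t_{ij} ≤ Sup_j for all j, has a solution. -/
/-! Let every buyer `i` split its demand over the sellers `j` of its component in proportion to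
their supplies, sending `D i * Sup j / T` with `T` the total supply of the component. The row of
`i` then sums to `D i` (if `T = 0`, balance forces `D i = 0`), and the column of `j` sums to
`Sup j` times (component demand) / (component supply), which balance bounds by `Sup j`.
Complete bipartiteness makes every pair that receives a positive amount a link. -/

open scoped Classical

namespace SimpleGraph

variable {B S 𝕜 : Type*} [Fintype B] [Fintype S] [Field 𝕜]
  (G : SimpleGraph (B ⊕ S)) (D : B → 𝕜) (Sup : S → 𝕜)

noncomputable section

def componentDemand (v : B ⊕ S) : 𝕜 :=
  ∑ i ∈ Finset.univ.filter (fun i => G.Reachable v (Sum.inl i)), D i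

def componentSupply (v : B ⊕ S) : 𝕜 :=
  ∑ j ∈ Finset.univ.filter (fun j => G.Reachable v (Sum.inr j)), Sup j

def proportionalFlow (i : B) (j : S) : 𝕜 :=
  if G.Reachable (Sum.inl i) (Sum.inr j) then
    D i * Sup j / G.componentSupply Sup (Sum.inl i) else 0

end

variable {G D Sup}

theorem componentSupply_congr {v w : B ⊕ S} (h : G.Reachable v w) :
    G.componentSupply Sup v = G.componentSupply Sup w := by
  unfold componentSupply
  congr 1
  ext j
  simp only [Finset.mem_filter, Finset.mem_univ, true_and]
  exact ⟨h.symm.trans, h.trans⟩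

theorem proportionalFlow_eq_zero {i : B} {j : S} (h : ¬G.Reachable (Sum.inl i) (Sum.inr j)) :
    G.proportionalFlow D Sup i j = 0 :=
  if_neg h

theorem sum_proportionalFlow_col (j : S) :
    ∑ i, G.proportionalFlow D Sup i j =
      G.componentDemand D (Sum.inr j) * (Sup j / G.componentSupply Sup (Sum.inr j)) := by
  rw [componentDemand, Finset.sum_mul, Finset.sum_filter]
  refine Finset.sum_congr rfl fun i _ => ?_
  by_cases hr : G.Reachable (Sum.inl i) (Sum.inr j)
  · rw [proportionalFlow, if_pos hr, if_pos hr.symm, componentSupply_congr hr, mul_div_assoc]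
  · rw [proportionalFlow_eq_zero hr, if_neg (mt Reachable.symm hr)]

variable [LinearOrder 𝕜] [IsStrictOrderedRing 𝕜]

theorem componentSupply_nonneg (hS : ∀ j, 0 ≤ Sup j) (v : B ⊕ S) :
    0 ≤ G.componentSupply Sup v :=
  Finset.sum_nonneg fun j _ => hS j

theorem le_componentDemand (hD : ∀ i, 0 ≤ D i) (i : B) :
    D i ≤ G.componentDemand D (Sum.inl i) :=
  Finset.single_le_sum (fun i' _ => hD i') (by simp)

theorem proportionalFlow_nonneg (hD : ∀ i, 0 ≤ D i) (hS : ∀ j, 0 ≤ Sup j) (i : B) (j : S) :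
    0 ≤ G.proportionalFlow D Sup i j := by
  unfold proportionalFlow
  split_ifs
  · exact div_nonneg (mul_nonneg (hD i) (hS j)) (componentSupply_nonneg hS _)
  · exact le_rfl

theorem sum_proportionalFlow_row {i : B} (hDi : 0 ≤ D i)
    (hbal : D i ≤ G.componentSupply Sup (Sum.inl i)) :
    ∑ j, G.proportionalFlow D Sup i j = D i := by
  have hsum : ∑ j, G.proportionalFlow D Sup i j =
      D i / G.componentSupply Sup (Sum.inl i) * G.componentSupply Sup (Sum.inl i) := by
    rw [componentSupply, Finset.mul_sum, Finset.sum_filter]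
    refine Finset.sum_congr rfl fun j _ => ?_
    unfold proportionalFlow componentSupply
    split_ifs <;> ring
  rw [hsum]
  generalize G.componentSupply Sup (Sum.inl i) = T at hbal
  rcases (hDi.trans hbal).eq_or_lt with rfl | hT
  · rw [mul_zero]
    exact (le_antisymm hbal hDi).symm
  · exact div_mul_cancel₀ _ hT.ne'

theorem sum_proportionalFlow_col_le (hS : ∀ j, 0 ≤ Sup j) {j : S}
    (hbal : G.componentDemand D (Sum.inr j) ≤ G.componentSupply Sup (Sum.inr j)) :
    ∑ i, G.proportionalFlow D Sup i j ≤ Sup j := by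
  have hT₀ : 0 ≤ G.componentSupply Sup (Sum.inr j) := componentSupply_nonneg hS _
  rw [sum_proportionalFlow_col]
  generalize G.componentDemand D (Sum.inr j) = d, G.componentSupply Sup (Sum.inr j) = T at hbal hT₀
  rcases hT₀.eq_or_lt with rfl | hT
  · simpa using hS j
  · calc d * (Sup j / T) ≤ T * (Sup j / T) := by gcongr; exact div_nonneg (hS j) hT.le
      _ = Sup j := mul_div_cancel₀ _ hT.ne'

end SimpleGraph

theorem stmt_12_general {B S : Type*} [Fintype B] [Fintype S]
    (D : B → ℝ) (Sup : S → ℝ) (l : B → S → Bool)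
    (hD : ∀ i, 0 ≤ D i) (hS : ∀ j, 0 ≤ Sup j)
    (L : Finset (B × S))
    (hbal : ∀ v : B ⊕ S,
      ∑ i ∈ Finset.univ.filter (fun i => (linkGraph L).Reachable v (Sum.inl i)), D i
        ≤ ∑ j ∈ Finset.univ.filter (fun j => (linkGraph L).Reachable v (Sum.inr j)), Sup j)
    (hcb : ∀ i j, (linkGraph L).Reachable (Sum.inl i) (Sum.inr j) → l i j = true) :
    ∃ t : B → S → ℝ,
      (∀ i j, 0 ≤ t i j) ∧
      (∀ i j, l i j = false → t i j = 0) ∧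
      (∀ i, ∑ j, t i j = D i) ∧
      (∀ j, ∑ i, t i j ≤ Sup j) := by
  refine ⟨(linkGraph L).proportionalFlow D Sup, (linkGraph L).proportionalFlow_nonneg hD hS,
    fun i j hl => SimpleGraph.proportionalFlow_eq_zero fun hr => by simp [hcb i j hr] at hl,
    fun i => SimpleGraph.sum_proportionalFlow_row (hD i)
      ((SimpleGraph.le_componentDemand hD i).trans (hbal _)),
    fun j => SimpleGraph.sum_proportionalFlow_col_le hS (hbal _)⟩

/-- Sufficiency for the feasibility LP: if on every connected component total
demand is at most total supply and every connected component is complete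
bipartite, then the feasibility constraint system has a solution. -/
theorem stmt_12 {B S : Type*} [Fintype B] [Fintype S]
    (D : B → ℝ) (Sup : S → ℝ) (l : B → S → Bool)
    (hD : ∀ i, 0 ≤ D i) (hS : ∀ j, 0 ≤ Sup j)
    (L : Finset (B × S)) (hL : L = Finset.univ.filter (fun p : B × S => l p.1 p.2))
    (hbal : ∀ v : B ⊕ S,
      ∑ i ∈ Finset.univ.filter (fun i => (linkGraph L).Reachable v (Sum.inl i)), D i
        ≤ ∑ j ∈ Finset.univ.filter (fun j => (linkGraph L).Reachable v (Sum.inr j)), Sup j)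
    (hcb : ∀ i j, (linkGraph L).Reachable (Sum.inl i) (Sum.inr j) → l i j = true) :
    ∃ t : B → S → ℝ,
      (∀ i j, 0 ≤ t i j) ∧
      (∀ i j, l i j = false → t i j = 0) ∧
      (∀ i, ∑ j, t i j = D i) ∧
      (∀ j, ∑ i, t i j ≤ Sup j) :=
  stmt_12_general D Sup l hD hS L hbal hcb
end
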